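/- Let S, A, B be categories, U_A : A ⥤ S and U_B : B ⥤ S functors with U_B an embedding, and F, G : A ⥤ B functors with F ⋙ U_B = U_A and G ⋙ U_B = U_A. If I : E ⥤ A is an equalizer of F and G, then I is an isomorphism of categories, and I is also an equalizer of the pair of functors F ⋙ U_B, G ⋙ U_B : A ⥤ S. -/
import Mathlib


open CategoryTheory

universe v u

/-- A functor `I : E ⥤ A` is an equalizer of `F, G : A ⥤ B` if `I ⋙ F = I ⋙ G` and every
functor `H : C ⥤ A` with `H ⋙ F = H ⋙ G` factors uniquely through `I`. -/
def IsEqualizerFunctor {A B E : Type u} [Category.{v} A] [Category.{v} B] [Category.{v} E]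
    (I : E ⥤ A) (F G : A ⥤ B) : Prop :=
  I ⋙ F = I ⋙ G ∧
    ∀ (C : Type u) [Category.{v} C] (H : C ⥤ A),
      H ⋙ F = H ⋙ G → ∃! K : C ⥤ E, K ⋙ I = H

/-- A functor `F : A ⥤ B` is an isomorphism of categories if it has a strict two-sided
inverse functor. -/
def IsIsoOfCategories {A B : Type u} [Category.{v} A] [Category.{v} B] (F : A ⥤ B) : Prop :=
  ∃ G : B ⥤ A, F ⋙ G = 𝟭 A ∧ G ⋙ F = 𝟭 B

/-- If `U_B` is an embedding, `F, G : A ⥤ B` are homomorphisms of emergences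
(`F ⋙ U_B = U_A = G ⋙ U_B`), and `I : E ⥤ A` is an equalizer of `F` and `G`, then `I` is an
isomorphism of categories and an equalizer of `F ⋙ U_B` and `G ⋙ U_B`. -/
theorem equalizer_of_homomorphisms_is_iso_and_strong
    {S A B E : Type u} [Category.{v} S] [Category.{v} A] [Category.{v} B] [Category.{v} E]
    (U_A : A ⥤ S) (U_B : B ⥤ S)
    (hinj : Function.Injective U_B.obj) (hfaith : U_B.Faithful)
    (F G : A ⥤ B) (hF : F ⋙ U_B = U_A) (hG : G ⋙ U_B = U_A)
    (I : E ⥤ A) (hI : IsEqualizerFunctor I F G) :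
    IsIsoOfCategories I ∧ IsEqualizerFunctor I (F ⋙ U_B) (G ⋙ U_B) := by
  have hFG : F ⋙ U_B = G ⋙ U_B := hF.trans hG.symm
  -- F = G since U_B is an embedding
  have hobj : ∀ X : A, F.obj X = G.obj X := fun X =>
    hinj (Functor.congr_obj hFG X)
  have hFeqG : F = G := by
    refine CategoryTheory.Functor.ext hobj fun X Y f => ?_
    apply hfaith.map_injective
    have := Functor.congr_hom hFG f
    simp only [Functor.comp_map] at this
    rw [this, Functor.map_comp, Functor.map_comp, eqToHom_map, eqToHom_map]
  -- universal property applied to 𝟭 A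
  obtain ⟨hIeq, huniv⟩ := hI
  obtain ⟨K, hK, hKuniq⟩ := huniv A (𝟭 A) (by rw [hFeqG])
  have hIK : I ⋙ K = 𝟭 E := by
    obtain ⟨K', hK', hKuniq'⟩ := huniv E I (by rw [hFeqG])
    have h1 : K' = I ⋙ K := (hKuniq' (I ⋙ K) (show (I ⋙ K) ⋙ I = I by rw [Functor.assoc, hK, Functor.comp_id])).symm
    have h2 : K' = 𝟭 E := (hKuniq' (𝟭 E) (show 𝟭 E ⋙ I = I from Functor.id_comp I)).symm
    rw [← h1, h2]
  refine ⟨⟨K, hIK, hK⟩, ?_, ?_⟩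
  · rw [← Functor.assoc, ← Functor.assoc, hIeq]
  · intro C _ H _
    exact huniv C H (by rw [hFeqG])
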